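/- The Gaussian radial basis function is strictly positive definite on ℝ²: for every shape parameter α > 0, every n ≥ 1, every tuple of pairwise distinct points x₁,…,xₙ ∈ ℝ², and every nonzero vector c ∈ ℝⁿ, one has ∑_{i=1}^{n} ∑_{j=1}^{n} c_i c_j exp(−α² ‖x_i − x_j‖₂²) > 0. Equivalently, the n×n matrix with entries exp(−α² ‖x_i − x_j‖₂²) is positive definite whenever the nodes x₁,…,xₙ are pairwise distinct. -/

import Mathlib

/-!
Put `g_p(v) = exp (-2α² ‖v - p‖²)`. By Apollonius' theorem `g_p g_q` is a Gaussian centred at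
the midpoint of `p` and `q` times `exp (-α² ‖p - q‖²)`, so
`∫ (∑ i, c i g_{x i})² = (π / 4α²)^(d/2) ∑ i ∑ j, c i c j exp (-α² ‖x i - x j‖²)`.
The left side is positive because the translates `g_{x i}` of distinct centres are linearly
independent: after dividing by `exp (-2α² ‖v‖²)` they become nonzero multiples of the distinct
characters `v ↦ exp ⟪4α² x i, v⟫` of `(ℝ^d, +)`, which are linearly independent (Dedekind–Artin).
-/

open Real MeasureTheory
open scoped RealInnerProductSpace

section Algebra

variable {V : Type*} [NormedAddCommGroup V] [InnerProductSpace ℝ V]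

theorem rexp_neg_mul_norm_sub_sq (b : ℝ) (v p : V) :
    rexp (-b * ‖v - p‖ ^ 2) =
      rexp (-b * ‖v‖ ^ 2) * rexp (-b * ‖p‖ ^ 2) * rexp ⟪(2 * b) • p, v⟫ := by
  rw [← Real.exp_add, ← Real.exp_add, norm_sub_sq_real, real_inner_smul_left, real_inner_comm]
  ring_nf

theorem rexp_mul_rexp_eq_midpoint (b : ℝ) (v p q : V) :
    rexp (-(2 * b) * ‖v - p‖ ^ 2) * rexp (-(2 * b) * ‖v - q‖ ^ 2) =
      rexp (-(4 * b) * ‖v - midpoint ℝ p q‖ ^ 2) * rexp (-b * ‖p - q‖ ^ 2) := by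
  have h := EuclideanGeometry.dist_sq_add_dist_sq_eq_two_mul_dist_midpoint_sq_add_half_dist_sq
    v p q
  simp only [dist_eq_norm] at h
  rw [← Real.exp_add, ← Real.exp_add]
  congr 1
  linear_combination (-(2 * b)) * h

variable {ι : Type*}

theorem linearIndependent_rexp_inner {y : ι → V} (hy : Function.Injective y) :
    LinearIndependent ℝ (fun i (v : V) => rexp ⟪y i, v⟫) := by
  let χ : ι → Multiplicative V →* ℝ := fun i =>
    { toFun := fun v => rexp ⟪y i, v.toAdd⟫
      map_one' := by simp
      map_mul' := fun v w => by simp only [toAdd_mul, inner_add_right, Real.exp_add] }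
  have hχ : Function.Injective χ := fun i j hij => hy <| by
    have h := DFunLike.congr_fun hij (Multiplicative.ofAdd (y i - y j))
    simp only [χ, MonoidHom.coe_mk, OneHom.coe_mk, toAdd_ofAdd, Real.exp_eq_exp] at h
    rw [← sub_eq_zero, ← inner_self_eq_zero (𝕜 := ℝ), inner_sub_left, h, sub_self]
  exact (linearIndependent_monoidHom (Multiplicative V) ℝ).comp χ hχ

theorem linearIndependent_rexp_neg_mul_norm_sub_sq [Fintype ι] {b : ℝ} (hb : b ≠ 0)
    {x : ι → V} (hx : Function.Injective x) :
    LinearIndependent ℝ (fun i (v : V) => rexp (-b * ‖v - x i‖ ^ 2)) := by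
  have hchar := Fintype.linearIndependent_iff.1 <|
    linearIndependent_rexp_inner ((smul_right_injective V (mul_ne_zero two_ne_zero hb)).comp hx)
  refine Fintype.linearIndependent_iff.2 fun c hc i => ?_
  have h := hchar (fun i => c i * rexp (-b * ‖x i‖ ^ 2)) (funext fun v => by
    have hv := congrFun hc v
    simp only [Finset.sum_apply, Pi.smul_apply, smul_eq_mul, rexp_neg_mul_norm_sub_sq b v,
      Pi.zero_apply] at hv ⊢
    refine mul_left_cancel₀ (Real.exp_pos (-b * ‖v‖ ^ 2)).ne' ?_
    rw [mul_zero, ← hv, Finset.mul_sum]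
    exact Finset.sum_congr rfl fun j _ => by simp only [Function.comp_apply]; ring) i
  exact (mul_eq_zero.1 h).resolve_right (Real.exp_pos _).ne'

end Algebra

theorem sq_sum_mul_eq_sum_sum {ι : Type*} [Fintype ι] (c f : ι → ℝ) :
    (∑ i, c i * f i) ^ 2 = ∑ i, ∑ j, c i * c j * (f i * f j) := by
  simp only [sq, Finset.sum_mul_sum, mul_mul_mul_comm]

section Integral

variable {V : Type*} [NormedAddCommGroup V] [InnerProductSpace ℝ V] [FiniteDimensional ℝ V]
  [MeasurableSpace V] [BorelSpace V] {b : ℝ}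

theorem integrable_rexp_neg_mul_sq_norm (hb : 0 < b) :
    Integrable (fun v : V => rexp (-b * ‖v‖ ^ 2)) :=
  .of_integral_ne_zero <| by rw [GaussianFourier.integral_rexp_neg_mul_sq_norm hb]; positivity

theorem integrable_rexp_mul_rexp (hb : 0 < b) (p q : V) :
    Integrable (fun v => rexp (-(2 * b) * ‖v - p‖ ^ 2) * rexp (-(2 * b) * ‖v - q‖ ^ 2)) := by
  simp only [rexp_mul_rexp_eq_midpoint]
  exact ((integrable_rexp_neg_mul_sq_norm (by linarith)).comp_sub_right _).mul_const _

theorem integral_rexp_mul_rexp (hb : 0 < b) (p q : V) :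
    ∫ v, rexp (-(2 * b) * ‖v - p‖ ^ 2) * rexp (-(2 * b) * ‖v - q‖ ^ 2) =
      (π / (4 * b)) ^ (Module.finrank ℝ V / 2 : ℝ) * rexp (-b * ‖p - q‖ ^ 2) := by
  simp only [rexp_mul_rexp_eq_midpoint]
  rw [integral_mul_const, integral_sub_right_eq_self (fun v : V => rexp (-(4 * b) * ‖v‖ ^ 2)),
    GaussianFourier.integral_rexp_neg_mul_sq_norm (by linarith)]

variable {ι : Type*} [Fintype ι]

theorem integrable_sq_sum_rexp (hb : 0 < b) (x : ι → V) (c : ι → ℝ) :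
    Integrable (fun v => (∑ i, c i * rexp (-(2 * b) * ‖v - x i‖ ^ 2)) ^ 2) := by
  simp only [sq_sum_mul_eq_sum_sum]
  exact integrable_finsetSum _ fun i _ => integrable_finsetSum _ fun j _ =>
    (integrable_rexp_mul_rexp hb _ _).const_mul _

theorem integral_sq_sum_rexp (hb : 0 < b) (x : ι → V) (c : ι → ℝ) :
    ∫ v, (∑ i, c i * rexp (-(2 * b) * ‖v - x i‖ ^ 2)) ^ 2 =
      (π / (4 * b)) ^ (Module.finrank ℝ V / 2 : ℝ) *
        ∑ i, ∑ j, c i * c j * rexp (-b * ‖x i - x j‖ ^ 2) := by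
  simp only [sq_sum_mul_eq_sum_sum]
  rw [integral_finsetSum _ fun i _ => integrable_finsetSum _ fun j _ =>
    (integrable_rexp_mul_rexp hb _ _).const_mul _]
  simp only [integral_finsetSum _ fun j _ => (integrable_rexp_mul_rexp hb _ _).const_mul _,
    integral_const_mul, integral_rexp_mul_rexp hb, Finset.mul_sum]
  exact Finset.sum_congr rfl fun i _ => Finset.sum_congr rfl fun j _ => by ring

theorem sum_sum_mul_rexp_neg_mul_norm_sub_sq_pos (hb : 0 < b) {x : ι → V}
    (hx : Function.Injective x) {c : ι → ℝ} (hc : c ≠ 0) :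
    0 < ∑ i, ∑ j, c i * c j * rexp (-b * ‖x i - x j‖ ^ 2) := by
  obtain ⟨v, hv⟩ : ∃ v, ∑ i, c i * rexp (-(2 * b) * ‖v - x i‖ ^ 2) ≠ 0 := by
    by_contra! h
    refine hc (funext <| Fintype.linearIndependent_iff.1
      (linearIndependent_rexp_neg_mul_norm_sub_sq (b := 2 * b) (by positivity) hx) c (funext fun v => ?_))
    simpa only [Finset.sum_apply, Pi.smul_apply, smul_eq_mul, Pi.zero_apply] using h v
  have hpos := integral_pos_of_integrable_nonneg_nonzero (μ := volume) (by fun_prop)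
    (integrable_sq_sum_rexp hb x c) (fun v => sq_nonneg _) (pow_ne_zero 2 hv)
  rw [integral_sq_sum_rexp hb] at hpos
  exact pos_of_mul_pos_right hpos (by positivity)

end Integral

theorem Matrix.posDef_of_sum_sum_mul_pos {ι : Type*} [Fintype ι] {M : Matrix ι ι ℝ}
    (hM : M.IsSymm) (h : ∀ c : ι → ℝ, c ≠ 0 → 0 < ∑ i, ∑ j, c i * c j * M i j) : M.PosDef := by
  refine .of_dotProduct_mulVec_pos (isHermitian_iff_isSymm.2 hM) fun c hc => ?_
  refine (h c hc).trans_eq ?_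
  simp only [star_trivial, dotProduct, mulVec, Finset.mul_sum]
  exact Finset.sum_congr rfl fun i _ => Finset.sum_congr rfl fun j _ => by ring

theorem gaussian_strictly_positive_definite_general
    (α : ℝ) (hα : 0 < α) (n : ℕ)
    (x : Fin n → EuclideanSpace ℝ (Fin 2)) (hx : Function.Injective x)
    (c : Fin n → ℝ) (hc : c ≠ 0) :
    0 < (∑ i, ∑ j, c i * c j * Real.exp (-α ^ 2 * ‖x i - x j‖ ^ 2)) ∧
      (Matrix.of fun i j => Real.exp (-α ^ 2 * ‖x i - x j‖ ^ 2)).PosDef := by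
  have hquad := fun (y : Fin n → ℝ) (hy : y ≠ 0) =>
    sum_sum_mul_rexp_neg_mul_norm_sub_sq_pos (pow_pos hα 2) hx hy
  refine ⟨hquad c hc, Matrix.posDef_of_sum_sum_mul_pos ?_ hquad⟩
  exact Matrix.IsSymm.ext fun i j => by simp only [Matrix.of_apply, norm_sub_rev]

/-- The Gaussian radial basis function `φ_G(r) = exp (-α² r²)` is strictly
positive definite on ℝ²: for every shape parameter `α > 0`, every `n ≥ 1`, every tuple of
pairwise distinct points and every nonzero vector `c`, the quadratic form
`∑ i ∑ j, c i * c j * exp (-α² ‖x i - x j‖²)` is positive; equivalently, the matrix with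
entries `exp (-α² ‖x i - x j‖²)` is positive definite. -/
theorem gaussian_strictly_positive_definite
    (α : ℝ) (hα : 0 < α) (n : ℕ) (hn : 1 ≤ n)
    (x : Fin n → EuclideanSpace ℝ (Fin 2)) (hx : Function.Injective x)
    (c : Fin n → ℝ) (hc : c ≠ 0) :
    0 < (∑ i, ∑ j, c i * c j * Real.exp (-α ^ 2 * ‖x i - x j‖ ^ 2)) ∧
      (Matrix.of fun i j => Real.exp (-α ^ 2 * ‖x i - x j‖ ^ 2)).PosDef :=
  gaussian_strictly_positive_definite_general α hα n x hx c hc
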